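/- arXiv:1701.06681 — 6 statements merged into one kernel-verified Lean document; each statement's English description precedes it below -/
import Mathlib

section
/- For binary DRPM, for every deterministic selection of the randomized symbols the induced input distribution deviates from the target by at most the largest message probability: for any function e : [M] → {0,1} satisfying e(i) = 0 whenever I_i ⊆ J_0 and e(i) = 1 whenever I_i ⊆ J_1 (with e arbitrary on messages whose interval meets both J_0 and J_1), one has | Σ_{i=1}^{M} π(i)·1[e(i)=x] − P_X(x) | ≤ max_{i∈[M]} π(i) for each x ∈ {0,1}. -/
/-!
Let `k` be the last message whose interval `I_k = [S_k, S_k + π_k)` starts at or before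
`P_X(0)`; then `P_X(0) ∈ [S_k, S_k + π_k]`. The intervals before `I_k` lie in `J_0` and those
after it in `J_1`, so the mass that `e` sends to `0` lies in `[S_k, S_k + π_k]` as well, and
differs from `P_X(0)` by at most `π_k`. The mass sent to `1` is the complement.
-/

open Finset

section PrefixSum

variable {ι : Type*} [Fintype ι] [LinearOrder ι] (π : ι → ℝ)

/-- The left endpoint of the interval `I_i`. -/
def prefixSum (i : ι) : ℝ := ∑ j ∈ univ.filter (fun j => j < i), π j

variable {π}

lemma prefixSum_nonneg (hπ : ∀ i, 0 ≤ π i) (i : ι) : 0 ≤ prefixSum π i :=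
  sum_nonneg fun j _ => hπ j

lemma prefixSum_add_self (i : ι) :
    prefixSum π i + π i = ∑ j ∈ univ.filter (fun j => j ≤ i), π j := by
  have : univ.filter (fun j => j ≤ i) = insert i (univ.filter (fun j => j < i)) := by
    ext j; simp [le_iff_lt_or_eq, or_comm]
  rw [this, sum_insert (by simp), add_comm, prefixSum]

lemma prefixSum_add_self_le_of_lt (hπ : ∀ i, 0 ≤ π i) {i k : ι} (h : i < k) :
    prefixSum π i + π i ≤ prefixSum π k := by
  rw [prefixSum_add_self]
  refine sum_le_sum_of_subset_of_nonneg (fun j hj => ?_) fun j _ _ => hπ j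
  simp only [mem_filter, mem_univ, true_and] at hj ⊢
  exact hj.trans_lt h

lemma prefixSum_add_self_le_sum (hπ : ∀ i, 0 ≤ π i) (i : ι) :
    prefixSum π i + π i ≤ ∑ j, π j := by
  rw [prefixSum_add_self]
  exact sum_le_sum_of_subset_of_nonneg (subset_univ _) fun j _ _ => hπ j

lemma exists_prefixSum_le_le_add_self [Nonempty ι] {t : ℝ} (ht₀ : 0 ≤ t)
    (ht : t ≤ ∑ j, π j) :
    ∃ k, prefixSum π k ≤ t ∧ t ≤ prefixSum π k + π k ∧ ∀ i, k < i → t < prefixSum π i := by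
  classical
  set T := univ.filter fun i => prefixSum π i ≤ t
  have hbot : univ.min' univ_nonempty ∈ T := by
    have : prefixSum π (univ.min' univ_nonempty) = 0 :=
      sum_eq_zero fun j hj => absurd (mem_filter.1 hj).2 (not_lt.2 (min'_le _ j (mem_univ j)))
    simpa [T, this] using ht₀
  set k := T.max' ⟨_, hbot⟩
  have hkT : prefixSum π k ≤ t := (mem_filter.1 (T.max'_mem _)).2
  have hright : ∀ i, k < i → t < prefixSum π i := fun i hik =>
    lt_of_not_ge fun hi => (T.le_max' i (by simpa [T] using hi)).not_gt hik
  refine ⟨k, hkT, ?_, hright⟩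
  by_cases hlast : ∃ i, k < i
  · -- the successor of `k` starts exactly where `I_k` ends
    obtain ⟨i₀, hi₀⟩ := hlast
    set i := (univ.filter fun i => k < i).min' ⟨i₀, by simpa using hi₀⟩
    have hki : k < i := (mem_filter.1 (min'_mem _ _)).2
    have hsucc : univ.filter (fun j => j < i) = univ.filter (fun j => j ≤ k) := by
      ext j
      simp only [mem_filter, mem_univ, true_and]
      refine ⟨fun hj => le_of_not_gt fun hkj => ?_, fun hj => hj.trans_lt hki⟩
      exact (min'_le _ j (by simpa using hkj)).not_gt hj
    rw [prefixSum_add_self, ← hsucc]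
    exact (hright i hki).le
  · push Not at hlast
    rw [prefixSum_add_self, filter_true_of_mem fun j _ => hlast j]
    exact ht

lemma sum_ite_mem_Icc_prefixSum (hπ : ∀ i, 0 ≤ π i) (p : ι → Prop) [DecidablePred p] {k : ι}
    (hlt : ∀ i, i < k → p i) (hgt : ∀ i, k < i → ¬ p i) :
    (∑ i, if p i then π i else 0) ∈ Set.Icc (prefixSum π k) (prefixSum π k + π k) := by
  have hnonneg : ∀ i, 0 ≤ if p i then π i else 0 := fun i => by split_ifs <;> simp [hπ i]
  constructor
  · calc prefixSum π k = ∑ j ∈ univ.filter (fun j => j < k), if p j then π j else 0 :=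
          sum_congr rfl fun j hj => by rw [if_pos (hlt j (mem_filter.1 hj).2)]
      _ ≤ _ := sum_le_sum_of_subset_of_nonneg (subset_univ _) fun j _ _ => hnonneg j
  · calc (∑ i, if p i then π i else 0)
          = ∑ j ∈ univ.filter (fun j => j ≤ k), if p j then π j else 0 := by
          refine (sum_subset (subset_univ _) fun j _ hj => ?_).symm
          rw [if_neg (hgt j (by simpa using hj))]
      _ ≤ _ := by
          rw [prefixSum_add_self]
          exact sum_le_sum fun j _ => by split_ifs <;> simp [hπ j]

end PrefixSum

lemma sum_ite_eq_zero_add_sum_ite_eq_one {ι : Type*} [Fintype ι] (e : ι → Fin 2) (π : ι → ℝ) :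
    ((∑ i, if e i = 0 then π i else 0) + ∑ i, if e i = 1 then π i else 0) = ∑ i, π i := by
  rw [← sum_add_distrib]
  refine sum_congr rfl fun i _ => ?_
  rcases Fin.exists_fin_two.1 ⟨e i, rfl⟩ with h | h <;> simp [h]

/-- For binary DRPM, every deterministic selection of the
randomized symbols induces an input distribution deviating from the target by
at most the largest message probability: if `e : [M] → {0,1}` satisfies
`e(i) = 0` whenever `I_i ⊆ J_0` and `e(i) = 1` whenever `I_i ⊆ J_1`
(with `e` arbitrary on messages whose interval meets both), then
`|Σ_i π(i)·1[e(i)=x] − P_X(x)| ≤ max_i π(i)` for each `x ∈ {0,1}`.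
Here `I_i = [Σ_{j<i} π(j), Σ_{j<i} π(j) + π(i))`, `J_0 = [0, P_X(0))`,
`J_1 = [P_X(0), 1)`. -/
theorem drpm_deterministic_selection_deviation
    {M : ℕ} (hM : 1 ≤ M)
    (π : Fin M → ℝ) (hπpos : ∀ i, 0 < π i) (hπsum : ∑ i, π i = 1)
    (PX : Fin 2 → ℝ) (hPXnonneg : ∀ x, 0 ≤ PX x) (hPXsum : PX 0 + PX 1 = 1)
    (e : Fin M → Fin 2)
    (he0 : ∀ i : Fin M,
      Set.Ico (∑ j ∈ Finset.univ.filter (fun j => j < i), π j)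
          ((∑ j ∈ Finset.univ.filter (fun j => j < i), π j) + π i)
        ⊆ Set.Ico (0:ℝ) (PX 0) → e i = 0)
    (he1 : ∀ i : Fin M,
      Set.Ico (∑ j ∈ Finset.univ.filter (fun j => j < i), π j)
          ((∑ j ∈ Finset.univ.filter (fun j => j < i), π j) + π i)
        ⊆ Set.Ico (PX 0) (1:ℝ) → e i = 1)
    (x : Fin 2) :
    |(∑ i : Fin M, if e i = x then π i else 0) - PX x|
      ≤ Finset.univ.sup' ⟨⟨0, hM⟩, Finset.mem_univ _⟩ π := by
  have hπ : ∀ i, 0 ≤ π i := fun i => (hπpos i).le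
  have : Nonempty (Fin M) := ⟨⟨0, hM⟩⟩
  obtain ⟨k, hkt, htk, hright⟩ := exists_prefixSum_le_le_add_self (hPXnonneg 0)
    (by linarith [hPXnonneg 1])
  obtain ⟨hA₀l, hA₀u⟩ := sum_ite_mem_Icc_prefixSum hπ (fun i => e i = 0) (k := k)
    (fun i hi => he0 i <| Set.Ico_subset_Ico (prefixSum_nonneg hπ i)
      ((prefixSum_add_self_le_of_lt hπ hi).trans hkt))
    (fun i hi => by
      rw [he1 i <| Set.Ico_subset_Ico (hright i hi).le (hπsum ▸ prefixSum_add_self_le_sum hπ i)]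
      decide)
  have hsum := sum_ite_eq_zero_add_sum_ite_eq_one e π
  have hπk : π k ≤ univ.sup' ⟨⟨0, hM⟩, mem_univ _⟩ π := le_sup' π (mem_univ k)
  rw [abs_le]
  fin_cases x <;> simp only [Fin.zero_eta, Fin.mk_one] <;> constructor <;> linarith
end

section
/- Stability of the common-information belief update under small encoding perturbations: fix y ∈ 𝒴 and suppose P := Σ_{x,s} Q(y|x,s) P_X(x|s) b(s) satisfies P > |𝒳||𝒮|ε. Define the nominal updated belief φ(s) = ( Σ_{x,s'} 1[g(s',x,y)=s] Q(y|x,s') P_X(x|s') b(s') ) / P and the perturbed updated belief b'(s) = ( Σ_{x,s'} 1[g(s',x,y)=s] Q(y|x,s') p(x|s') b(s') ) / ( Σ_{x,s'} Q(y|x,s') p(x|s') b(s') ). Then for every s ∈ 𝒮, |b'(s) − φ(s)| ≤ 2|𝒳||𝒮|ε / (P − |𝒳||𝒮|ε). -/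
/-!
Both updated beliefs are ratios `A / P` and `A' / P'` of sums `∑ c(x,s) q(x|s) b(s)` whose
coefficients `c` (namely `Q(y|·,·)` and `1[g(·,·,y) = s] Q(y|·,·)`) lie in `[0, 1]`, so replacing
`P_X` by `p` moves each sum by at most `|𝒳||𝒮|ε`. Since `0 ≤ A ≤ P`, the identity
`A'/P' - A/P = ((A' - A) P + A (P - P')) / (P' P)` then gives the bound.
-/

open Finset

lemma abs_div_sub_div_le_of_abs_sub_le {A A' P P' δ : ℝ} (hA : |A| ≤ P)
    (hAδ : |A' - A| ≤ δ) (hPδ : |P' - P| ≤ δ) (hδP : δ < P) :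
    |A' / P' - A / P| ≤ 2 * δ / (P - δ) := by
  have hδ : 0 ≤ δ := (abs_nonneg _).trans hAδ
  have hP : 0 < P := hδ.trans_lt hδP
  have hP'δ : P - δ ≤ P' := by linarith [(abs_le.mp hPδ).1]
  have hP' : 0 < P' := by linarith
  have hnum : |(A' - A) * P + A * (P - P')| ≤ 2 * δ * P :=
    calc |(A' - A) * P + A * (P - P')| ≤ |(A' - A) * P| + |A * (P - P')| := abs_add_le _ _
      _ = |A' - A| * P + |A| * |P' - P| := by
          rw [abs_mul, abs_mul, abs_of_pos hP, abs_sub_comm P]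
      _ ≤ δ * P + P * δ := by gcongr
      _ = 2 * δ * P := by ring
  calc |A' / P' - A / P| = |(A' - A) * P + A * (P - P')| / (P' * P) := by
        rw [div_sub_div _ _ hP'.ne' hP.ne', abs_div, abs_of_pos (mul_pos hP' hP)]
        ring_nf
    _ ≤ 2 * δ * P / (P' * P) := by gcongr
    _ = 2 * δ / P' := mul_div_mul_right _ _ hP.ne'
    _ ≤ 2 * δ / (P - δ) := by gcongr

lemma abs_sum_mul_le_card_mul {ι : Type*} [Fintype ι] {f w : ι → ℝ} {ε : ℝ}
    (hf : ∀ i, |f i| ≤ 1) (hw : ∀ i, |w i| ≤ ε) :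
    |∑ i, f i * w i| ≤ Fintype.card ι * ε :=
  calc |∑ i, f i * w i| ≤ ∑ i, |f i * w i| := abs_sum_le_sum_abs _ _
    _ ≤ ∑ _i : ι, ε := sum_le_sum fun i _ => by
        rw [abs_mul]
        exact (mul_le_of_le_one_left (abs_nonneg _) (hf i)).trans (hw i)
    _ = Fintype.card ι * ε := by rw [sum_const, nsmul_eq_mul, card_univ]

section WeightedSum

variable {X S : Type*} [Fintype X] [Fintype S]

def weightedSum (c q : X → S → ℝ) (b : S → ℝ) : ℝ :=
  ∑ x, ∑ s, c x s * q x s * b s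

lemma abs_weightedSum_le {c c' q : X → S → ℝ} {b : S → ℝ} (hc : ∀ x s, |c x s| ≤ c' x s)
    (hq : ∀ x s, 0 ≤ q x s) (hb : ∀ s, 0 ≤ b s) :
    |weightedSum c q b| ≤ weightedSum c' q b :=
  (abs_sum_le_sum_abs _ _).trans <| sum_le_sum fun x _ =>
    (abs_sum_le_sum_abs _ _).trans <| sum_le_sum fun s _ => by
      rw [abs_mul, abs_mul, abs_of_nonneg (hq x s), abs_of_nonneg (hb s)]
      exact mul_le_mul_of_nonneg_right (mul_le_mul_of_nonneg_right (hc x s) (hq x s)) (hb s)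

lemma abs_weightedSum_sub_le {c q q' : X → S → ℝ} {b : S → ℝ} {ε : ℝ}
    (hc : ∀ x s, |c x s| ≤ 1) (hΔ : ∀ x s, |(q' x s - q x s) * b s| ≤ ε) :
    |weightedSum c q' b - weightedSum c q b| ≤
      (Fintype.card X : ℝ) * (Fintype.card S : ℝ) * ε := by
  have hdiff : weightedSum c q' b - weightedSum c q b =
      ∑ xs : X × S, c xs.1 xs.2 * ((q' xs.1 xs.2 - q xs.1 xs.2) * b xs.2) := by
    simp only [weightedSum, ← sum_sub_distrib, Fintype.sum_prod_type]
    exact sum_congr rfl fun x _ => sum_congr rfl fun s _ => by ring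
  rw [hdiff, ← Nat.cast_mul, ← Fintype.card_prod]
  exact abs_sum_mul_le_card_mul (fun xs => hc xs.1 xs.2) (fun xs => hΔ xs.1 xs.2)

end WeightedSum

theorem belief_update_stability_general
    {X Y S : Type*} [Fintype X] [Fintype S] [DecidableEq S]
    (Q : Y → X → S → ℝ) (hQ : ∀ y x s, 0 ≤ Q y x s ∧ Q y x s ≤ 1)
    (g : S → X → Y → S)
    (b : S → ℝ) (hb : ∀ s, 0 ≤ b s)
    (PX p : X → S → ℝ)
    (hPX : ∀ s, (∀ x, 0 ≤ PX x s) ∧ ∑ x, PX x s = 1)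
    (ε : ℝ)
    (hΔ : ∀ x s, |(p x s - PX x s) * b s| ≤ ε)
    (y : Y)
    (hP : (Fintype.card X : ℝ) * (Fintype.card S : ℝ) * ε
            < ∑ x, ∑ s, Q y x s * PX x s * b s) :
    ∀ s : S,
      |(∑ x, ∑ s', (if g s' x y = s then (1:ℝ) else 0) * Q y x s' * p x s' * b s') /
          (∑ x, ∑ s', Q y x s' * p x s' * b s') -
        (∑ x, ∑ s', (if g s' x y = s then (1:ℝ) else 0) * Q y x s' * PX x s' * b s') /
          (∑ x, ∑ s', Q y x s' * PX x s' * b s')|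
      ≤ 2 * ((Fintype.card X : ℝ) * (Fintype.card S : ℝ)) * ε /
          ((∑ x, ∑ s', Q y x s' * PX x s' * b s') -
            (Fintype.card X : ℝ) * (Fintype.card S : ℝ) * ε) := by
  intro s
  have hQ_le_one : ∀ x s', |Q y x s'| ≤ 1 := fun x s' => by
    rw [abs_of_nonneg (hQ y x s').1]; exact (hQ y x s').2
  have hindicator : ∀ x s', |(if g s' x y = s then (1:ℝ) else 0) * Q y x s'| ≤ Q y x s' :=
    fun x s' => by split_ifs <;> simp [abs_of_nonneg (hQ y x s').1, (hQ y x s').1]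
  exact (abs_div_sub_div_le_of_abs_sub_le
    (abs_weightedSum_le hindicator (fun x s' => (hPX s').1 x) hb)
    (abs_weightedSum_sub_le (fun x s' => (hindicator x s').trans (hQ y x s').2) hΔ)
    (abs_weightedSum_sub_le hQ_le_one hΔ) hP).trans_eq (by rw [weightedSum]; ring)

/-- Stability of the common-information belief update under
small encoding perturbations.  With `p(x|s) = P_X(x|s) + Δ(x,s)` where
`|Δ(x,s)·b(s)| ≤ ε`, fix `y` and suppose
`P := Σ_{x,s} Q(y|x,s) P_X(x|s) b(s) > |𝒳||𝒮|ε`.  Then for every `s`,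
`|b'(s) − φ(s)| ≤ 2|𝒳||𝒮|ε / (P − |𝒳||𝒮|ε)`, where `φ` is the nominal updated
belief and `b'` the perturbed one. -/
theorem belief_update_stability
    {X Y S : Type*} [Fintype X] [Fintype Y] [Fintype S] [DecidableEq S]
    (Q : Y → X → S → ℝ) (hQ : ∀ y x s, 0 ≤ Q y x s ∧ Q y x s ≤ 1)
    (hQsum : ∀ x s, ∑ y, Q y x s = 1)
    (g : S → X → Y → S)
    (b : S → ℝ) (hb : ∀ s, 0 ≤ b s) (hbsum : ∑ s, b s = 1)
    (PX p : X → S → ℝ)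
    (hPX : ∀ s, (∀ x, 0 ≤ PX x s) ∧ ∑ x, PX x s = 1)
    (hp : ∀ s, (∀ x, 0 ≤ p x s) ∧ ∑ x, p x s = 1)
    (ε : ℝ) (hε : 0 ≤ ε)
    (hΔ : ∀ x s, |(p x s - PX x s) * b s| ≤ ε)
    (y : Y)
    (hP : (Fintype.card X : ℝ) * (Fintype.card S : ℝ) * ε
            < ∑ x, ∑ s, Q y x s * PX x s * b s) :
    ∀ s : S,
      |(∑ x, ∑ s', (if g s' x y = s then (1:ℝ) else 0) * Q y x s' * p x s' * b s') /
          (∑ x, ∑ s', Q y x s' * p x s' * b s') -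
        (∑ x, ∑ s', (if g s' x y = s then (1:ℝ) else 0) * Q y x s' * PX x s' * b s') /
          (∑ x, ∑ s', Q y x s' * PX x s' * b s')|
      ≤ 2 * ((Fintype.card X : ℝ) * (Fintype.card S : ℝ)) * ε /
          ((∑ x, ∑ s', Q y x s' * PX x s' * b s') -
            (Fintype.card X : ℝ) * (Fintype.card S : ℝ) * ε) :=
  belief_update_stability_general Q hQ g b hb PX p hPX ε hΔ y hP
end

section
/- In the one-step transmission model with binary DRPM encoding, the marginal distribution of the channel output equals the one computed from the common-information belief: P(Y = y) = P̂_Y(y) for every y ∈ 𝒴. -/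
open MeasureTheory Finset

/-- Product of uniform measures on `[0,1)`, one per state: the law of the
common randomness vector `V = (V^s)_{s ∈ 𝒮}`. -/
noncomputable def uniformPi (S : Type*) [Fintype S] : Measure (S → ℝ) :=
  Measure.pi fun _ => (volume : Measure ℝ).restrict (Set.Ico (0:ℝ) 1)

/-- `B̂(s) = Σ_{i : σ(i) = s} Π(i)`. -/
noncomputable def Bhat {S : Type*} [DecidableEq S] {M : ℕ}
    (Pi : Fin M → ℝ) (σ : Fin M → S) (s : S) : ℝ :=
  ∑ i, if σ i = s then Pi i else 0

/-- `Π^s(i) = Π(i)·1[σ(i)=s] / B̂(s)`. -/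
noncomputable def condPi {S : Type*} [DecidableEq S] {M : ℕ}
    (Pi : Fin M → ℝ) (σ : Fin M → S) (s : S) (i : Fin M) : ℝ :=
  (if σ i = s then Pi i else 0) / Bhat Pi σ s

/-- Left endpoint of the interval `I_i` in the partition of `[0,1)` into
consecutive intervals of lengths `Π^{σ(i)}(j)` over messages `j` with
`σ(j) = σ(i)`, in increasing order of `j`. -/
noncomputable def ileft {S : Type*} [DecidableEq S] {M : ℕ}
    (Pi : Fin M → ℝ) (σ : Fin M → S) (i : Fin M) : ℝ :=
  ∑ j ∈ Finset.univ.filter (fun j => j < i ∧ σ j = σ i), condPi Pi σ (σ i) j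

/-- `a_i = |I_i ∩ [0, P_X(0|σ(i)))|` (Lebesgue measure of the intersection). -/
noncomputable def aCoef {S : Type*} [DecidableEq S] {M : ℕ}
    (Pi : Fin M → ℝ) (σ : Fin M → S) (PX : Fin 2 → S → ℝ) (i : Fin M) : ℝ :=
  min (ileft Pi σ i + condPi Pi σ (σ i) i) (PX 0 (σ i)) -
    min (ileft Pi σ i) (PX 0 (σ i))

/-- The binary DRPM encoder: `e(i,v) = 0` if `v·Π^{σ(i)}(i) < a_i`, else `1`. -/
noncomputable def enc {S : Type*} [DecidableEq S] {M : ℕ}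
    (Pi : Fin M → ℝ) (σ : Fin M → S) (PX : Fin 2 → S → ℝ) (i : Fin M) (v : ℝ) : Fin 2 :=
  if v * condPi Pi σ (σ i) i < aCoef Pi σ PX i then 0 else 1


instance : IsProbabilityMeasure ((volume : Measure ℝ).restrict (Set.Ico (0:ℝ) 1)) :=
  ⟨by simp [Real.volume_Ico]⟩

instance (S : Type*) [Fintype S] : IsProbabilityMeasure (uniformPi S) := by
  unfold uniformPi; infer_instance

lemma uniform_Iio (t : ℝ) (h0 : 0 ≤ t) (h1 : t ≤ 1) :
    ((volume : Measure ℝ).restrict (Set.Ico (0:ℝ) 1)) (Set.Iio t) = ENNReal.ofReal t := by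
  rw [Measure.restrict_apply measurableSet_Iio]
  have h : Set.Iio t ∩ Set.Ico (0:ℝ) 1 = Set.Ico 0 t := by
    ext x
    simp only [Set.mem_inter_iff, Set.mem_Iio, Set.mem_Ico]
    exact ⟨fun h => ⟨h.2.1, h.1⟩, fun h => ⟨h.2, h.1, lt_of_lt_of_le h.2 h1⟩⟩
  rw [h, Real.volume_Ico, sub_zero]

lemma uniformPi_eval_Iio {S : Type*} [Fintype S] [DecidableEq S] (s : S) (t : ℝ)
    (h0 : 0 ≤ t) (h1 : t ≤ 1) :
    uniformPi S (Function.eval s ⁻¹' Set.Iio t) = ENNReal.ofReal t := by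
  rw [uniformPi, Set.eval_preimage, Measure.pi_pi]
  rw [Fintype.prod_eq_single s (fun i hi => by
    rw [Function.update_of_ne hi]
    simp)]
  rw [Function.update_self, uniform_Iio t h0 h1]

lemma integral_step {S : Type*} [Fintype S] [DecidableEq S] (s : S) (t q0 q1 : ℝ)
    (h0 : 0 ≤ t) (h1 : t ≤ 1) :
    ∫ v, (if v s < t then q0 else q1) ∂ uniformPi S = q0 * t + q1 * (1 - t) := by
  have hms : MeasurableSet (Function.eval s ⁻¹' Set.Iio t : Set (S → ℝ)) :=
    (measurable_pi_apply s) (measurableSet_Iio (a := t))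
  have hfun : (fun v : S → ℝ => if v s < t then q0 else q1)
      = fun v => (Function.eval s ⁻¹' Set.Iio t).indicator (fun _ => q0 - q1) v + q1 := by
    ext v
    by_cases h : v s < t <;>
      simp [Set.indicator, h, Function.eval]
  rw [hfun, integral_add ((integrable_const (q0 - q1)).indicator hms) (integrable_const q1),
    integral_indicator_const _ hms, integral_const]
  rw [measureReal_def, uniformPi_eval_Iio s t h0 h1]
  simp [ENNReal.toReal_ofReal h0]
  ring

/-- partial sums of `condPi` over the fiber of `s`, by message index -/
noncomputable def Lfun {S : Type*} [DecidableEq S] {M : ℕ}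
    (Pi : Fin M → ℝ) (σ : Fin M → S) (s : S) (n : ℕ) : ℝ :=
  ∑ j : Fin M, if ((j : ℕ) < n ∧ σ j = s) then condPi Pi σ s j else 0

lemma Lfun_succ {S : Type*} [DecidableEq S] {M : ℕ}
    (Pi : Fin M → ℝ) (σ : Fin M → S) (s : S) (w : Fin M) :
    Lfun Pi σ s ((w : ℕ) + 1)
      = Lfun Pi σ s (w : ℕ) + (if σ w = s then condPi Pi σ s w else 0) := by
  unfold Lfun
  have : ∀ j : Fin M, (if ((j : ℕ) < (w : ℕ) + 1 ∧ σ j = s) then condPi Pi σ s j else 0)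
      = (if ((j : ℕ) < (w : ℕ) ∧ σ j = s) then condPi Pi σ s j else 0)
        + (if (j = w ∧ σ j = s) then condPi Pi σ s j else 0) := by
    intro j
    by_cases h3 : σ j = s
    · by_cases h2 : j = w
      · subst h2; simp [h3]
      · have : ((j:ℕ) < (w:ℕ) + 1) ↔ ((j:ℕ) < (w:ℕ)) := by
          have : (j:ℕ) ≠ w := fun h => h2 (Fin.ext h)
          omega
        simp only [h3, h2, this, eq_self_iff_true, and_true, false_and, ↓reduceIte, add_zero]
    · simp [h3]
  rw [Finset.sum_congr rfl (fun j _ => this j), Finset.sum_add_distrib]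
  congr 1
  simp only [ite_and]
  rw [Finset.sum_ite_eq' Finset.univ w (fun j => if σ j = s then condPi Pi σ s j else 0)]
  simp

lemma ileft_eq_Lfun {S : Type*} [DecidableEq S] {M : ℕ}
    (Pi : Fin M → ℝ) (σ : Fin M → S) {s : S} {w : Fin M} (hs : σ w = s) :
    ileft Pi σ w = Lfun Pi σ s (w : ℕ) := by
  unfold ileft Lfun
  rw [Finset.sum_filter]
  exact Finset.sum_congr rfl (fun j _ => by simp only [hs, Fin.lt_def])

lemma sum_aCoef {S : Type*} [DecidableEq S] {M : ℕ}
    (Pi : Fin M → ℝ) (σ : Fin M → S) (PX : Fin 2 → S → ℝ) (s : S)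
    (hB : 0 < Bhat Pi σ s) (h0 : 0 ≤ PX 0 s) (h1 : PX 0 s ≤ 1) :
    ∑ w : Fin M, (if σ w = s then aCoef Pi σ PX w else 0) = PX 0 s := by
  set g : ℕ → ℝ := fun n => min (Lfun Pi σ s n) (PX 0 s) with hg
  have key : ∀ w : Fin M, (if σ w = s then aCoef Pi σ PX w else 0)
      = g ((w : ℕ) + 1) - g (w : ℕ) := by
    intro w
    by_cases hs : σ w = s
    · rw [if_pos hs, hg]
      simp only
      rw [Lfun_succ, if_pos hs, aCoef, hs, ileft_eq_Lfun Pi σ hs]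
    · rw [if_neg hs, hg]
      simp only
      rw [Lfun_succ, if_neg hs, add_zero, sub_self]
  rw [Finset.sum_congr rfl (fun w _ => key w)]
  rw [Fin.sum_univ_eq_sum_range (fun n => g (n + 1) - g n) M, Finset.sum_range_sub g M]
  have hL0 : Lfun Pi σ s 0 = 0 := by simp [Lfun]
  have hLM : Lfun Pi σ s M = 1 := by
    unfold Lfun
    have h : ∀ j : Fin M, (if ((j : ℕ) < M ∧ σ j = s) then condPi Pi σ s j else 0)
        = condPi Pi σ s j := by
      intro j
      by_cases h3 : σ j = s
      · rw [if_pos ⟨j.isLt, h3⟩]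
      · rw [if_neg (by tauto), condPi, if_neg h3, zero_div]
    rw [Finset.sum_congr rfl (fun j _ => h j)]
    unfold condPi
    rw [← Finset.sum_div]
    have h2 : (∑ j : Fin M, (if σ j = s then Pi j else 0)) = Bhat Pi σ s := rfl
    rw [h2, div_self hB.ne']
  rw [hg]
  simp only
  rw [hL0, hLM, min_eq_right h1, min_eq_left h0, sub_zero]

/-- `P̂_Y(y) = Σ_{x∈{0,1}} Σ_{s : B̂(s)>0} Q(y|x,s) P_X(x|s) B̂(s)`. -/
noncomputable def PhatY {Y S : Type*} [Fintype S] [DecidableEq S] {M : ℕ}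
    (Pi : Fin M → ℝ) (σ : Fin M → S) (PX : Fin 2 → S → ℝ)
    (Q : Y → Fin 2 → S → ℝ) (y : Y) : ℝ :=
  ∑ x : Fin 2, ∑ s : S, if 0 < Bhat Pi σ s then Q y x s * PX x s * Bhat Pi σ s else 0

/-- The one-step posterior `Π₁(i)` as a function of the common randomness `v`
and the channel output `y`. -/
noncomputable def post {Y S : Type*} [DecidableEq S] {M : ℕ}
    (Pi : Fin M → ℝ) (σ : Fin M → S) (PX : Fin 2 → S → ℝ)
    (Q : Y → Fin 2 → S → ℝ) (v : S → ℝ) (y : Y) (i : Fin M) : ℝ :=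
  Q y (enc Pi σ PX i (v (σ i))) (σ i) * Pi i /
    ∑ j, Q y (enc Pi σ PX j (v (σ j))) (σ j) * Pi j

/-- Log-likelihood ratio `log(p/(1-p))`. -/
noncomputable def llr (p : ℝ) : ℝ := Real.log (p / (1 - p))

/-- `ē(x|w) = P(e(w, V^{σ(w)}) = x)`. -/
noncomputable def encAvg {S : Type*} [Fintype S] [DecidableEq S] {M : ℕ}
    (Pi : Fin M → ℝ) (σ : Fin M → S) (PX : Fin 2 → S → ℝ) (w : Fin M) (x : Fin 2) : ℝ :=
  ∫ v, (if enc Pi σ PX w (v (σ w)) = x then (1:ℝ) else 0) ∂ uniformPi S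

/-- In the one-step transmission model with binary DRPM
encoding, the marginal law of the output matches the one computed from the
common-information belief: `P(Y = y) = P̂_Y(y)` for every `y`.  Here
`P(Y = y) = Σ_w Π(w) ∫ Q(y | e(w, v^{σ(w)}), σ(w)) dv` by the model's joint law. -/
theorem output_marginal_eq_PhatY
    {Y S : Type*} [Fintype Y] [Fintype S] [DecidableEq S]
    {M : ℕ} (hM : 2 ≤ M)
    (Pi : Fin M → ℝ) (hPi : ∀ i, 0 < Pi i ∧ Pi i < 1) (hPisum : ∑ i, Pi i = 1)
    (σ : Fin M → S)
    (Q : Y → Fin 2 → S → ℝ) (hQpos : ∀ y x s, 0 < Q y x s)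
    (hQsum : ∀ x s, ∑ y, Q y x s = 1)
    (PX : Fin 2 → S → ℝ)
    (hPX : ∀ s, 0 < Bhat Pi σ s → (∀ x, 0 ≤ PX x s) ∧ PX 0 s + PX 1 s = 1)
    (y : Y) :
    ∑ w : Fin M, Pi w *
        ∫ v, Q y (enc Pi σ PX w (v (σ w))) (σ w) ∂ uniformPi S
      = PhatY Pi σ PX Q y := by
    classical
  -- basic positivity facts
  have hBpos : ∀ w : Fin M, 0 < Bhat Pi σ (σ w) := by
    intro w
    have hle : Pi w ≤ Bhat Pi σ (σ w) := by
      have := Finset.single_le_sum (f := fun i => if σ i = σ w then Pi i else 0)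
        (fun i _ => by by_cases h : σ i = σ w <;> simp [h, (hPi i).1.le]) (Finset.mem_univ w)
      simpa [Bhat] using this
    exact lt_of_lt_of_le (hPi w).1 hle
  have hcw : ∀ w : Fin M, condPi Pi σ (σ w) w = Pi w / Bhat Pi σ (σ w) := by
    intro w; rw [condPi, if_pos rfl]
  have hcpos : ∀ w : Fin M, 0 < condPi Pi σ (σ w) w := by
    intro w; rw [hcw]; exact div_pos (hPi w).1 (hBpos w)
  have hileft0 : ∀ w : Fin M, 0 ≤ ileft Pi σ w := by
    intro w
    refine Finset.sum_nonneg (fun j _ => ?_)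
    refine div_nonneg ?_ (hBpos w).le
    by_cases h : σ j = σ w <;> simp [h, (hPi j).1.le]
  have ha0 : ∀ w : Fin M, 0 ≤ aCoef Pi σ PX w := by
    intro w
    exact sub_nonneg.2 (min_le_min (le_add_of_nonneg_right (hcpos w).le) le_rfl)
  have hac : ∀ w : Fin M, aCoef Pi σ PX w ≤ condPi Pi σ (σ w) w := by
    intro w
    have h1 : min (ileft Pi σ w + condPi Pi σ (σ w) w) (PX 0 (σ w))
        ≤ min (ileft Pi σ w + condPi Pi σ (σ w) w) (PX 0 (σ w) + condPi Pi σ (σ w) w) :=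
      min_le_min le_rfl (le_add_of_nonneg_right (hcpos w).le)
    rw [min_add_add_right] at h1
    have := h1
    rw [aCoef]
    linarith
  -- per-message integral
  have ht0 : ∀ w : Fin M, 0 ≤ aCoef Pi σ PX w / condPi Pi σ (σ w) w :=
    fun w => div_nonneg (ha0 w) (hcpos w).le
  have ht1 : ∀ w : Fin M, aCoef Pi σ PX w / condPi Pi σ (σ w) w ≤ 1 :=
    fun w => (div_le_one (hcpos w)).2 (hac w)
  have hint : ∀ w : Fin M,
      (∫ v, Q y (enc Pi σ PX w (v (σ w))) (σ w) ∂ uniformPi S)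
        = Q y 0 (σ w) * (aCoef Pi σ PX w / condPi Pi σ (σ w) w)
          + Q y 1 (σ w) * (1 - aCoef Pi σ PX w / condPi Pi σ (σ w) w) := by
    intro w
    have hfun : ∀ v : S → ℝ, Q y (enc Pi σ PX w (v (σ w))) (σ w)
        = if v (σ w) < aCoef Pi σ PX w / condPi Pi σ (σ w) w
          then Q y 0 (σ w) else Q y 1 (σ w) := by
      intro v
      rw [enc, apply_ite (fun x => Q y x (σ w))]
      exact if_congr (lt_div_iff₀ (hcpos w)).symm rfl rfl
    simp only [hfun]
    exact integral_step (σ w) _ _ _ (ht0 w) (ht1 w)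
  -- per-message algebra
  have halg : ∀ w : Fin M,
      Pi w * (Q y 0 (σ w) * (aCoef Pi σ PX w / condPi Pi σ (σ w) w)
        + Q y 1 (σ w) * (1 - aCoef Pi σ PX w / condPi Pi σ (σ w) w))
      = Q y 0 (σ w) * (Bhat Pi σ (σ w) * aCoef Pi σ PX w)
        + Q y 1 (σ w) * (Pi w - Bhat Pi σ (σ w) * aCoef Pi σ PX w) := by
    intro w
    rw [hcw w]
    have hPiw : Pi w ≠ 0 := (hPi w).1.ne'
    have hBw : Bhat Pi σ (σ w) ≠ 0 := (hBpos w).ne'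
    field_simp
  calc ∑ w : Fin M, Pi w * ∫ v, Q y (enc Pi σ PX w (v (σ w))) (σ w) ∂ uniformPi S
      = ∑ w : Fin M, (Q y 0 (σ w) * (Bhat Pi σ (σ w) * aCoef Pi σ PX w)
          + Q y 1 (σ w) * (Pi w - Bhat Pi σ (σ w) * aCoef Pi σ PX w)) := by
        refine Finset.sum_congr rfl (fun w _ => ?_)
        rw [hint w, halg w]
    _ = ∑ s : S, ∑ w ∈ Finset.univ.filter (fun w => σ w = s),
          (Q y 0 (σ w) * (Bhat Pi σ (σ w) * aCoef Pi σ PX w)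
            + Q y 1 (σ w) * (Pi w - Bhat Pi σ (σ w) * aCoef Pi σ PX w)) :=
        (Finset.sum_fiberwise_of_maps_to (fun w _ => Finset.mem_univ (σ w)) _).symm
    _ = PhatY Pi σ PX Q y := by
        rw [PhatY, Fin.sum_univ_two, ← Finset.sum_add_distrib]
        refine Finset.sum_congr rfl (fun s _ => ?_)
        by_cases hBs : 0 < Bhat Pi σ s
        · obtain ⟨hx0, hsum1⟩ := hPX s hBs
          have hA : ∑ w ∈ Finset.univ.filter (fun w => σ w = s), aCoef Pi σ PX w
              = PX 0 s := by
            rw [Finset.sum_filter]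
            exact sum_aCoef Pi σ PX s hBs (hx0 0) (by have := hx0 1; linarith)
          have hP : ∑ w ∈ Finset.univ.filter (fun w => σ w = s), Pi w = Bhat Pi σ s := by
            rw [Finset.sum_filter]; rfl
          have e1 : ∑ w ∈ Finset.univ.filter (fun w => σ w = s),
              (Q y 0 (σ w) * (Bhat Pi σ (σ w) * aCoef Pi σ PX w)
                + Q y 1 (σ w) * (Pi w - Bhat Pi σ (σ w) * aCoef Pi σ PX w))
              = ∑ w ∈ Finset.univ.filter (fun w => σ w = s),
              (Q y 0 s * Bhat Pi σ s * aCoef Pi σ PX w + Q y 1 s * Pi w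
                - Q y 1 s * Bhat Pi σ s * aCoef Pi σ PX w) := by
            refine Finset.sum_congr rfl (fun w hw => ?_)
            rw [(Finset.mem_filter.1 hw).2]
            ring
          rw [e1]
          simp only [Finset.sum_sub_distrib, Finset.sum_add_distrib, ← Finset.mul_sum]
          rw [hA, hP, if_pos hBs, if_pos hBs]
          have hx1 : PX 1 s = 1 - PX 0 s := by linarith
          rw [hx1]
          ring
        · have hempty : ∀ w : Fin M, ¬ (σ w = s) := fun w hw => hBs (hw ▸ hBpos w)
          rw [Finset.filter_false_of_mem (fun w _ => hempty w), Finset.sum_empty,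
            if_neg hBs, if_neg hBs, add_zero]
end

section
/- In the one-step transmission model with binary DRPM encoding, for every message w ∈ [M] and symbol x̄ ∈ {0,1} with P(W=w, X=x̄) > 0, and every y ∈ 𝒴: E[ Σ_{x∈{0,1}} Σ_{s∈𝒮} Q(y|x,s) · ( Σ_i 1[e(i,V^{σ(i)})=x] · 1[σ(i)=s] · Π(i) ) | W=w, X=x̄ ] = P̂_Y(y) + Q(y|x̄,σ(w))·Π(w) − Π(w) · Σ_{x∈{0,1}} Q(y|x,σ(w)) · ē(x|w), where ē(x|w) = P( e(w, V^{σ(w)}) = x ). -/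
open MeasureTheory Finset

/-! ### Auxiliary lemmas -/


theorem my_integral_pi_fin {n : ℕ} {E : Fin n → Type*}
    [∀ i, MeasurableSpace (E i)] (μ : ∀ i, Measure (E i)) [∀ i, SigmaFinite (μ i)]
    (f : (i : Fin n) → E i → ℝ) :
    ∫ x, ∏ i, f i (x i) ∂Measure.pi μ = ∏ i, ∫ x, f i x ∂μ i := by
  induction n with
  | zero =>
      simp only [Finset.univ_eq_empty, Finset.prod_empty, integral_const,
        Measure.pi_empty_univ, ENNReal.toReal_one, measureReal_def, smul_eq_mul, mul_one, one_smul]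
  | succ n n_ih =>
      calc
        _ = ∫ x : E 0 × ((i : Fin n) → E (Fin.succ i)),
            f 0 x.1 * ∏ i : Fin n, f (Fin.succ i) (x.2 i)
              ∂(μ 0).prod (Measure.pi fun j => μ (Fin.succ j)) := by
          rw [← ((measurePreserving_piFinSuccAbove μ 0).symm).integral_comp']
          simp only [MeasurableEquiv.piFinSuccAbove_symm_apply, Fin.insertNthEquiv,
            Fin.prod_univ_succ, Fin.insertNth_zero, Equiv.coe_fn_mk, Fin.cons_succ,
            Fin.zero_succAbove, cast_eq, Fin.cons_zero]
          rfl
        _ = (∫ x, f 0 x ∂μ 0) * ∏ i : Fin n, ∫ x, f (Fin.succ i) x ∂μ (Fin.succ i) := by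
          rw [← n_ih, ← integral_prod_mul]
        _ = ∏ i, ∫ x, f i x ∂μ i := by rw [Fin.prod_univ_succ]

theorem my_integral_pi {ι : Type*} [Fintype ι] {E : Type*}
    [MeasurableSpace E] (μ : Measure E) [SigmaFinite μ] (f : ι → E → ℝ) :
    ∫ x : ι → E, ∏ i, f i (x i) ∂Measure.pi (fun _ => μ) = ∏ i, ∫ x, f i x ∂μ := by
  let e := (Fintype.equivFin ι).symm
  rw [← (measurePreserving_piCongrLeft (fun _ => μ) e).integral_comp']
  simp_rw [← e.prod_comp, MeasurableEquiv.coe_piCongrLeft, Equiv.piCongrLeft_apply_apply,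
    my_integral_pi_fin]


noncomputable def nu : Measure ℝ := (volume : Measure ℝ).restrict (Set.Ico (0:ℝ) 1)

noncomputable def chi (p : ℝ) (v : ℝ) : ℝ := if v < p then 1 else 0

instance : IsProbabilityMeasure nu := by
  constructor
  rw [nu, Measure.restrict_apply_univ, Real.volume_Ico]
  norm_num

lemma chi_meas (p : ℝ) : Measurable (chi p) :=
  Measurable.ite measurableSet_Iio measurable_const measurable_const

lemma chi_int (p : ℝ) : Integrable (chi p) nu := by
  have : chi p = (Set.Iio p).indicator (fun _ => (1:ℝ)) := by
    ext v; simp [chi, Set.indicator_apply, Set.mem_Iio]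
  rw [this]
  exact (integrable_const 1).indicator measurableSet_Iio

lemma integral_chi {p : ℝ} (h0 : 0 ≤ p) (h1 : p ≤ 1) : ∫ v, chi p v ∂nu = p := by
  have : chi p = (Set.Iio p).indicator (fun _ => (1:ℝ)) := by
    ext v; simp [chi, Set.indicator_apply, Set.mem_Iio]
  rw [this, integral_indicator measurableSet_Iio, setIntegral_const, smul_eq_mul, mul_one, nu,
    measureReal_def, Measure.restrict_apply measurableSet_Iio]
  have : Set.Iio p ∩ Set.Ico (0:ℝ) 1 = Set.Ico 0 p := by
    ext x
    simp only [Set.mem_inter_iff, Set.mem_Iio, Set.mem_Ico]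
    constructor
    · rintro ⟨h, h2, _⟩; exact ⟨h2, h⟩
    · rintro ⟨h2, h⟩; exact ⟨h, h2, lt_of_lt_of_le h h1⟩
  rw [this, Real.volume_Ico, ENNReal.toReal_ofReal (by linarith)]; ring

lemma chi_mul_chi (p q : ℝ) : (fun v => chi p v * chi q v) = chi (min p q) := by
  ext v
  simp only [chi, lt_min_iff]
  by_cases h1 : v < p <;> by_cases h2 : v < q <;> simp [h1, h2]

lemma integral_chi_mul_chi {p q : ℝ} (h0 : 0 ≤ p) (h1 : p ≤ 1) (h0' : 0 ≤ q) (h1' : q ≤ 1) :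
    ∫ v, chi p v * chi q v ∂nu = min p q := by
  rw [chi_mul_chi]
  exact integral_chi (le_min h0 h0') (min_le_of_left_le h1)



lemma integral_eval {S : Type*} [Fintype S] [DecidableEq S] (g : ℝ → ℝ) (s : S) :
    ∫ v : S → ℝ, g (v s) ∂Measure.pi (fun _ => nu) = ∫ r, g r ∂nu := by
  have h1 : ∀ v : S → ℝ, g (v s) = ∏ u, (fun (u : S) (r : ℝ) => if u = s then g r else 1) u (v u) := by
    intro v
    rw [Finset.prod_ite_eq' Finset.univ s (fun u => g (v u))]
    simp
  simp_rw [h1]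
  rw [show (∫ (v : S → ℝ), ∏ x : S, if x = s then g (v x) else 1 ∂Measure.pi fun _ => nu)
      = ∏ u : S, ∫ r, (if u = s then g r else 1) ∂nu
    from my_integral_pi nu (fun u r => if u = s then g r else 1)]
  have h2 : ∀ u : S, (∫ r, (if u = s then g r else 1) ∂nu) = if u = s then ∫ r, g r ∂nu else 1 := by
    intro u; split_ifs <;> simp
  simp_rw [h2]
  rw [Finset.prod_ite_eq' Finset.univ s (fun _ => ∫ r, g r ∂nu)]
  simp

lemma integral_eval_mul {S : Type*} [Fintype S] [DecidableEq S] (g h : ℝ → ℝ) {s t : S}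
    (hst : s ≠ t) :
    ∫ v : S → ℝ, g (v s) * h (v t) ∂Measure.pi (fun _ => nu)
      = (∫ r, g r ∂nu) * ∫ r, h r ∂nu := by
  have h1 : ∀ v : S → ℝ, g (v s) * h (v t)
      = ∏ u, (fun (u : S) (r : ℝ) => (if u = s then g r else 1) * (if u = t then h r else 1)) u (v u) := by
    intro v
    rw [Finset.prod_mul_distrib, Finset.prod_ite_eq' Finset.univ s (fun u => g (v u)),
      Finset.prod_ite_eq' Finset.univ t (fun u => h (v u))]
    simp
  simp_rw [h1]
  rw [show (∫ (v : S → ℝ), ∏ x : S, (if x = s then g (v x) else 1) * (if x = t then h (v x) else 1)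
        ∂Measure.pi fun _ => nu)
      = ∏ u : S, ∫ r, (if u = s then g r else 1) * (if u = t then h r else 1) ∂nu
    from my_integral_pi nu (fun u r => (if u = s then g r else 1) * (if u = t then h r else 1))]
  have h2 : ∀ u : S, (∫ r, (if u = s then g r else 1) * (if u = t then h r else 1) ∂nu)
      = (if u = s then ∫ r, g r ∂nu else 1) * (if u = t then ∫ r, h r ∂nu else 1) := by
    intro u
    rcases eq_or_ne u s with rfl | hus
    · have hut : u ≠ t := hst
      simp [hut]
    · simp only [if_neg hus, one_mul]
      split_ifs <;> simp
  simp_rw [h2]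
  rw [Finset.prod_mul_distrib, Finset.prod_ite_eq' Finset.univ s (fun _ => ∫ r, g r ∂nu),
    Finset.prod_ite_eq' Finset.univ t (fun _ => ∫ r, h r ∂nu)]
  simp

noncomputable def pfun {S : Type*} [DecidableEq S] {M : ℕ}
    (Pi : Fin M → ℝ) (σ : Fin M → S) (PX : Fin 2 → S → ℝ) (i : Fin M) : ℝ :=
  aCoef Pi σ PX i / condPi Pi σ (σ i) i

section Model
variable {S : Type*} [DecidableEq S] {M : ℕ}
  {Pi : Fin M → ℝ} {σ : Fin M → S} {PX : Fin 2 → S → ℝ}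
  (hPi : ∀ i, 0 < Pi i)
include hPi

lemma Bhat_nonneg (s : S) : 0 ≤ Bhat Pi σ s :=
  Finset.sum_nonneg fun j _ => by
    by_cases h : σ j = s <;> simp [h, (hPi j).le]

lemma Bhat_pos (i : Fin M) : 0 < Bhat Pi σ (σ i) := by
  have h : (if σ i = σ i then Pi i else 0) ≤ Bhat Pi σ (σ i) :=
    Finset.single_le_sum (f := fun j => if σ j = σ i then Pi j else 0)
      (fun j _ => by by_cases h : σ j = σ i <;> simp [h, (hPi j).le]) (Finset.mem_univ i)
  simp only [if_pos rfl] at h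
  exact lt_of_lt_of_le (hPi i) h

lemma condPi_nonneg (s : S) (i : Fin M) : 0 ≤ condPi Pi σ s i := by
  refine div_nonneg ?_ (Bhat_nonneg hPi s)
  by_cases h : σ i = s <;> simp [h, (hPi i).le]

lemma condPi_pos (i : Fin M) : 0 < condPi Pi σ (σ i) i := by
  rw [condPi, if_pos rfl]
  exact div_pos (hPi i) (Bhat_pos hPi i)

lemma ileft_nonneg (i : Fin M) : 0 ≤ ileft Pi σ i :=
  Finset.sum_nonneg fun j _ => condPi_nonneg hPi _ j

lemma aCoef_nonneg (i : Fin M) : 0 ≤ aCoef Pi σ PX i := by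
  rw [aCoef, sub_nonneg]
  exact min_le_min (le_add_of_nonneg_right (condPi_nonneg hPi _ i)) le_rfl

lemma aCoef_le (i : Fin M) : aCoef Pi σ PX i ≤ condPi Pi σ (σ i) i := by
  have hπ : (0:ℝ) ≤ condPi Pi σ (σ i) i := condPi_nonneg hPi (σ i) i
  rw [aCoef]
  rcases le_total (ileft Pi σ i) (PX 0 (σ i)) with h | h
  · rw [min_eq_left h]
    have := min_le_left (ileft Pi σ i + condPi Pi σ (σ i) i) (PX 0 (σ i))
    linarith
  · rw [min_eq_right h]
    have := min_le_right (ileft Pi σ i + condPi Pi σ (σ i) i) (PX 0 (σ i))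
    linarith

lemma pfun_nonneg (i : Fin M) : 0 ≤ pfun Pi σ PX i :=
  div_nonneg (aCoef_nonneg hPi i) (condPi_nonneg hPi _ i)

lemma pfun_le_one (i : Fin M) : pfun Pi σ PX i ≤ 1 := by
  rw [pfun, div_le_one (condPi_pos hPi i)]
  exact aCoef_le hPi i

lemma enc_eq (i : Fin M) (v : ℝ) (x : Fin 2) :
    (if enc Pi σ PX i v = x then (1:ℝ) else 0)
      = if x = 0 then chi (pfun Pi σ PX i) v else 1 - chi (pfun Pi σ PX i) v := by
  have hiff : v * condPi Pi σ (σ i) i < aCoef Pi σ PX i ↔ v < pfun Pi σ PX i := by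
    rw [pfun, lt_div_iff₀ (condPi_pos hPi i)]
  rw [enc, chi]
  by_cases h : v < pfun Pi σ PX i
  · rw [if_pos (hiff.mpr h), if_pos h]
    fin_cases x <;> simp
  · rw [if_neg (fun hh => h (hiff.mp hh)), if_neg h]
    fin_cases x <;> simp

lemma ileft_add_le {j k : Fin M} (hjk : j < k) (hσ : σ j = σ k) :
    ileft Pi σ j + condPi Pi σ (σ j) j ≤ ileft Pi σ k := by
  have hij : ileft Pi σ j + condPi Pi σ (σ j) j
      = ∑ m ∈ insert j (Finset.univ.filter (fun m => m < j ∧ σ m = σ j)),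
          condPi Pi σ (σ j) m := by
    rw [Finset.sum_insert (by simp), ileft, add_comm]
  rw [hij, ileft, ← hσ]
  refine Finset.sum_le_sum_of_subset_of_nonneg ?_
    (fun m _ _ => condPi_nonneg hPi _ m)
  intro m hm
  simp only [Finset.mem_insert, Finset.mem_filter, Finset.mem_univ, true_and] at hm ⊢
  rcases hm with rfl | ⟨h1, h2⟩
  · exact ⟨hjk, rfl⟩
  · exact ⟨lt_trans h1 hjk, h2⟩

lemma aCoef_full {j k : Fin M} (hjk : j < k) (hσ : σ j = σ k)
    (hk : 0 < aCoef Pi σ PX k) : aCoef Pi σ PX j = condPi Pi σ (σ j) j := by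
  have hc : ileft Pi σ k < PX 0 (σ k) := by
    by_contra h
    push_neg at h
    rw [aCoef, min_eq_right h,
      min_eq_right (le_trans h (le_add_of_nonneg_right (condPi_nonneg hPi _ k)))] at hk
    linarith
  have hle : ileft Pi σ j + condPi Pi σ (σ j) j ≤ ileft Pi σ k := ileft_add_le hPi hjk hσ
  have hPXeq : PX 0 (σ j) = PX 0 (σ k) := by rw [hσ]
  have hcj : ileft Pi σ j + condPi Pi σ (σ j) j < PX 0 (σ j) := by rw [hPXeq]; linarith
  have hcn : (0:ℝ) ≤ condPi Pi σ (σ j) j := condPi_nonneg hPi (σ j) j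
  rw [aCoef, min_eq_left hcj.le, min_eq_left (by linarith), add_sub_cancel_left]

lemma min_pfun {i w : Fin M} (hne : i ≠ w) (hσ : σ i = σ w) :
    min (pfun Pi σ PX w) (pfun Pi σ PX i) = pfun Pi σ PX w * pfun Pi σ PX i := by
  rcases lt_trichotomy i w with h | h | h
  · rcases (aCoef_nonneg hPi w : (0:ℝ) ≤ aCoef Pi σ PX w).lt_or_eq with hw | hw
    · have : pfun Pi σ PX i = 1 := by
        rw [pfun, aCoef_full hPi h hσ hw, div_self (condPi_pos hPi i).ne']
      rw [this, min_eq_left (pfun_le_one hPi w), mul_one]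
    · have : pfun Pi σ PX w = 0 := by rw [pfun, ← hw, zero_div]
      rw [this, min_eq_left (pfun_nonneg hPi i), zero_mul]
  · exact absurd h hne
  · rcases (aCoef_nonneg hPi i : (0:ℝ) ≤ aCoef Pi σ PX i).lt_or_eq with hw | hw
    · have : pfun Pi σ PX w = 1 := by
        rw [pfun, aCoef_full hPi h hσ.symm hw, div_self (condPi_pos hPi w).ne']
      rw [this, min_eq_right (pfun_le_one hPi i), one_mul]
    · have : pfun Pi σ PX i = 0 := by rw [pfun, ← hw, zero_div]
      rw [this, min_eq_right (pfun_nonneg hPi w), mul_zero]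

lemma tel (s : S) (hB : 0 < Bhat Pi σ s) (h0 : 0 ≤ PX 0 s) (h1 : PX 0 s ≤ 1) :
    ∑ i, (if σ i = s then aCoef Pi σ PX i else 0) = PX 0 s := by
  set G : ℕ → ℝ := fun n =>
    min (∑ j ∈ Finset.univ.filter (fun j : Fin M => (j:ℕ) < n ∧ σ j = s), condPi Pi σ s j)
      (PX 0 s) with hG
  have step : ∀ i : Fin M, (if σ i = s then aCoef Pi σ PX i else 0)
      = G ((i:ℕ)+1) - G (i:ℕ) := by
    intro i
    by_cases hσi : σ i = s
    · have hfilt : Finset.univ.filter (fun j : Fin M => (j:ℕ) < (i:ℕ)+1 ∧ σ j = s)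
          = insert i (Finset.univ.filter (fun j : Fin M => (j:ℕ) < (i:ℕ) ∧ σ j = s)) := by
        ext j
        simp only [Finset.mem_filter, Finset.mem_univ, true_and, Finset.mem_insert]
        constructor
        · rintro ⟨hlt, hjs⟩
          rcases Nat.lt_succ_iff_lt_or_eq.mp hlt with h | h
          · exact Or.inr ⟨h, hjs⟩
          · exact Or.inl (Fin.ext h)
        · rintro (rfl | ⟨h, hjs⟩)
          · exact ⟨Nat.lt_succ_self _, hσi⟩
          · exact ⟨Nat.lt_succ_of_lt h, hjs⟩
      have hil : ileft Pi σ i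
          = ∑ j ∈ Finset.univ.filter (fun j : Fin M => (j:ℕ) < (i:ℕ) ∧ σ j = s),
              condPi Pi σ s j := by
        rw [ileft, hσi]
        exact Finset.sum_congr
          (Finset.filter_congr fun j _ => and_congr_left' Fin.lt_def) fun j _ => rfl
      have hG1 : G ((i:ℕ)+1)
          = min (condPi Pi σ s i
              + ∑ j ∈ Finset.univ.filter (fun j : Fin M => (j:ℕ) < (i:ℕ) ∧ σ j = s),
                  condPi Pi σ s j) (PX 0 s) := by
        rw [hG]
        simp only []
        rw [hfilt, Finset.sum_insert (by simp)]
      rw [if_pos hσi, hG1, aCoef, hσi, hil, add_comm]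
    · have hfilt : Finset.univ.filter (fun j : Fin M => (j:ℕ) < (i:ℕ)+1 ∧ σ j = s)
          = Finset.univ.filter (fun j : Fin M => (j:ℕ) < (i:ℕ) ∧ σ j = s) := by
        ext j
        simp only [Finset.mem_filter, Finset.mem_univ, true_and]
        constructor
        · rintro ⟨hlt, hjs⟩
          rcases Nat.lt_succ_iff_lt_or_eq.mp hlt with h | h
          · exact ⟨h, hjs⟩
          · exact absurd hjs (by rw [Fin.ext h]; exact hσi)
        · rintro ⟨h, hjs⟩
          exact ⟨Nat.lt_succ_of_lt h, hjs⟩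
      rw [if_neg hσi, hG, eq_comm, sub_eq_zero]
      simp only []
      rw [hfilt]
  calc ∑ i : Fin M, (if σ i = s then aCoef Pi σ PX i else 0)
      = ∑ i : Fin M, (G ((i:ℕ)+1) - G (i:ℕ)) := Finset.sum_congr rfl (fun i _ => step i)
    _ = ∑ n ∈ Finset.range M, (G (n+1) - G n) :=
        Fin.sum_univ_eq_sum_range (fun n => G (n+1) - G n) M
    _ = G M - G 0 := Finset.sum_range_sub G M
    _ = PX 0 s := by
        have hG0 : G 0 = 0 := by
          rw [hG]
          simp only []
          rw [show Finset.univ.filter (fun j : Fin M => (j:ℕ) < 0 ∧ σ j = s) = ∅ by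
            ext j; simp]
          rw [Finset.sum_empty, min_eq_left h0]
        have hGM : G M = PX 0 s := by
          rw [hG]
          simp only []
          rw [show Finset.univ.filter (fun j : Fin M => (j:ℕ) < M ∧ σ j = s)
              = Finset.univ.filter (fun j : Fin M => σ j = s) by
            apply Finset.filter_congr
            intro j _
            simp [j.isLt]]
          have hsum1 : ∑ j ∈ Finset.univ.filter (fun j : Fin M => σ j = s), condPi Pi σ s j
              = 1 := by
            simp only [condPi]
            rw [← Finset.sum_div]
            rw [show ∑ j ∈ Finset.univ.filter (fun j : Fin M => σ j = s),
                (if σ j = s then Pi j else 0) = Bhat Pi σ s from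
              (Finset.sum_filter (fun j : Fin M => σ j = s) (fun j => if σ j = s then Pi j else 0)).trans ?_]
            · exact div_self hB.ne'
            · apply Finset.sum_congr rfl
              intro j _
              by_cases h : σ j = s <;> simp [h]
          rw [hsum1, min_eq_right h1]
        rw [hG0, hGM, sub_zero]


end Model

lemma chi_mul_chi_apply (p q v : ℝ) : chi p v * chi q v = chi (min p q) v :=
  congrFun (chi_mul_chi p q) v

lemma uniformPi_eq (S : Type*) [Fintype S] : uniformPi S = Measure.pi (fun _ : S => nu) := rfl

instance inst_s5 (S : Type*) [Fintype S] : IsProbabilityMeasure (uniformPi S) := by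
  rw [uniformPi_eq]; infer_instance

lemma K2 {p q : ℝ} (h0p : 0 ≤ p) (h1p : p ≤ 1) (h0q : 0 ≤ q) (h1q : q ≤ 1) :
    ∫ r, chi p r * (1 - chi q r) ∂nu = p - min p q := by
  have hpt : ∀ r, chi p r * (1 - chi q r) = chi p r - chi (min p q) r := by
    intro r; rw [mul_sub, mul_one, chi_mul_chi_apply]
  simp_rw [hpt]
  rw [integral_sub (chi_int p) (chi_int (min p q)), integral_chi h0p h1p,
    integral_chi (le_min h0p h0q) (min_le_of_left_le h1p)]

lemma K3 {p q : ℝ} (h0p : 0 ≤ p) (h1p : p ≤ 1) (h0q : 0 ≤ q) (h1q : q ≤ 1) :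
    ∫ r, (1 - chi p r) * chi q r ∂nu = q - min p q := by
  have hpt : ∀ r, (1 - chi p r) * chi q r = chi q r - chi (min p q) r := by
    intro r; rw [sub_mul, one_mul, chi_mul_chi_apply]
  simp_rw [hpt]
  rw [integral_sub (chi_int q) (chi_int (min p q)), integral_chi h0q h1q,
    integral_chi (le_min h0p h0q) (min_le_of_left_le h1p)]

lemma K4 {p q : ℝ} (h0p : 0 ≤ p) (h1p : p ≤ 1) (h0q : 0 ≤ q) (h1q : q ≤ 1) :
    ∫ r, (1 - chi p r) * (1 - chi q r) ∂nu = 1 - p - q + min p q := by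
  have hpt : ∀ r, (1 - chi p r) * (1 - chi q r)
      = (1 - chi p r) - (chi q r - chi (min p q) r) := by
    intro r; rw [← chi_mul_chi_apply]; ring
  simp_rw [hpt]
  have i1 : Integrable (fun r => 1 - chi p r) nu := (integrable_const 1).sub (chi_int p)
  have i2 : Integrable (fun r => chi q r - chi (min p q) r) nu :=
    (chi_int q).sub (chi_int (min p q))
  rw [integral_sub i1 i2, integral_sub (integrable_const 1) (chi_int p),
    integral_sub (chi_int q) (chi_int (min p q)),
    integral_chi h0p h1p, integral_chi h0q h1q,
    integral_chi (le_min h0p h0q) (min_le_of_left_le h1p), integral_const]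
  simp
  ring

section Model2
variable {S : Type*} [Fintype S] [DecidableEq S] {M : ℕ}
  {Pi : Fin M → ℝ} {σ : Fin M → S} {PX : Fin 2 → S → ℝ}
  (hPi : ∀ i, 0 < Pi i)
include hPi

lemma encInd_meas (i : Fin M) (x : Fin 2) :
    Measurable (fun r : ℝ => if enc Pi σ PX i r = x then (1:ℝ) else 0) := by
  have h : (fun r : ℝ => if enc Pi σ PX i r = x then (1:ℝ) else 0)
      = fun r => if x = 0 then chi (pfun Pi σ PX i) r else 1 - chi (pfun Pi σ PX i) r :=
    funext fun r => enc_eq hPi i r x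
  rw [h]
  split_ifs with hx
  · exact chi_meas _
  · exact measurable_const.sub (chi_meas _)

omit hPi in
lemma encAvg_int_eval (i : Fin M) (x : Fin 2) :
    encAvg Pi σ PX i x = ∫ r, (if enc Pi σ PX i r = x then (1:ℝ) else 0) ∂nu := by
  rw [encAvg, uniformPi_eq]
  exact integral_eval (fun r => if enc Pi σ PX i r = x then (1:ℝ) else 0) (σ i)

lemma encAvg_eq (i : Fin M) (x : Fin 2) :
    encAvg Pi σ PX i x = if x = 0 then pfun Pi σ PX i else 1 - pfun Pi σ PX i := by
  rw [encAvg_int_eval]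
  simp_rw [enc_eq hPi]
  split_ifs with hx
  · exact integral_chi (pfun_nonneg hPi i) (pfun_le_one hPi i)
  · rw [integral_sub (integrable_const 1) (chi_int _),
      integral_chi (pfun_nonneg hPi i) (pfun_le_one hPi i), integral_const]
    simp

lemma cross_same {i w : Fin M} (hne : i ≠ w) (hσ : σ i = σ w) (xb x : Fin 2) :
    ∫ r, (if enc Pi σ PX w r = xb then (1:ℝ) else 0)
        * (if enc Pi σ PX i r = x then (1:ℝ) else 0) ∂nu
      = encAvg Pi σ PX w xb * encAvg Pi σ PX i x := by
  simp_rw [enc_eq hPi, encAvg_eq hPi]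
  have hmin : min (pfun Pi σ PX w) (pfun Pi σ PX i) = pfun Pi σ PX w * pfun Pi σ PX i :=
    min_pfun hPi hne hσ
  have h0w : (0:ℝ) ≤ pfun Pi σ PX w := pfun_nonneg hPi w
  have h1w : pfun Pi σ PX w ≤ 1 := pfun_le_one hPi w
  have h0i : (0:ℝ) ≤ pfun Pi σ PX i := pfun_nonneg hPi i
  have h1i : pfun Pi σ PX i ≤ 1 := pfun_le_one hPi i
  by_cases hxb : xb = 0 <;> by_cases hx : x = 0 <;>
    simp only [hxb, hx, if_true, if_false, if_pos, if_neg, one_ne_zero, reduceIte]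
  · rw [show (∫ r, chi (pfun Pi σ PX w) r * chi (pfun Pi σ PX i) r ∂nu)
        = min (pfun Pi σ PX w) (pfun Pi σ PX i) from by
      simp_rw [chi_mul_chi_apply]
      exact integral_chi (le_min h0w h0i) (min_le_of_left_le h1w), hmin]
  · rw [K2 h0w h1w h0i h1i, hmin]; ring
  · rw [K3 h0w h1w h0i h1i, hmin]; ring
  · rw [K4 h0w h1w h0i h1i, hmin]; ring

end Model2
section Model3
variable {Y : Type*} {S : Type*} [Fintype S] [DecidableEq S] {M : ℕ}
  {Pi : Fin M → ℝ} {σ : Fin M → S} {PX : Fin 2 → S → ℝ}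
  (hPi : ∀ i, 0 < Pi i)
include hPi

lemma phat_eq (hPX : ∀ s, 0 < Bhat Pi σ s → (∀ x, 0 ≤ PX x s) ∧ PX 0 s + PX 1 s = 1)
    (Q : Y → Fin 2 → S → ℝ) (y : Y) :
    ∑ i, ∑ x : Fin 2, (Pi i * Q y x (σ i)) * encAvg Pi σ PX i x = PhatY Pi σ PX Q y := by
  have key : ∀ (x : Fin 2) (s : S), ∑ i, (if σ i = s then Pi i * encAvg Pi σ PX i x else 0)
      = if 0 < Bhat Pi σ s then PX x s * Bhat Pi σ s else 0 := by
    intro x s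
    by_cases hB : 0 < Bhat Pi σ s
    · rw [if_pos hB]
      obtain ⟨hge, hsum1⟩ := hPX s hB
      have h0 : 0 ≤ PX 0 s := hge 0
      have h1 : PX 0 s ≤ 1 := by have := hge 1; linarith
      have hp : ∀ i, σ i = s → Pi i * pfun Pi σ PX i = Bhat Pi σ s * aCoef Pi σ PX i := by
        intro i hσi
        have hc : condPi Pi σ (σ i) i = Pi i / Bhat Pi σ s := by rw [condPi, if_pos rfl, hσi]
        rw [pfun, hc, div_div_eq_mul_div, mul_comm (Pi i), div_mul_cancel₀ _ (hPi i).ne',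
          mul_comm]
      fin_cases x
      · show (∑ i, if σ i = s then Pi i * encAvg Pi σ PX i 0 else 0) = PX 0 s * Bhat Pi σ s
        have hterm : ∀ i, (if σ i = s then Pi i * encAvg Pi σ PX i 0 else 0)
            = Bhat Pi σ s * (if σ i = s then aCoef Pi σ PX i else 0) := by
          intro i
          by_cases hσi : σ i = s
          · rw [if_pos hσi, if_pos hσi, encAvg_eq hPi, if_pos rfl, hp i hσi]
          · rw [if_neg hσi, if_neg hσi, mul_zero]
        rw [Finset.sum_congr rfl (fun i _ => hterm i), ← Finset.mul_sum,
          tel hPi s hB h0 h1, mul_comm]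
      · show (∑ i, if σ i = s then Pi i * encAvg Pi σ PX i 1 else 0) = PX 1 s * Bhat Pi σ s
        have hterm : ∀ i, (if σ i = s then Pi i * encAvg Pi σ PX i 1 else 0)
            = (if σ i = s then Pi i else 0)
              - Bhat Pi σ s * (if σ i = s then aCoef Pi σ PX i else 0) := by
          intro i
          by_cases hσi : σ i = s
          · rw [if_pos hσi, if_pos hσi, if_pos hσi, encAvg_eq hPi,
              if_neg (by norm_num : ¬(1 : Fin 2) = 0), mul_sub, mul_one, hp i hσi]
          · rw [if_neg hσi, if_neg hσi, if_neg hσi, mul_zero, sub_zero]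
        rw [Finset.sum_congr rfl (fun i _ => hterm i), Finset.sum_sub_distrib,
          ← Finset.mul_sum, tel hPi s hB h0 h1]
        have hBdef : ∑ i, (if σ i = s then Pi i else 0) = Bhat Pi σ s := rfl
        rw [hBdef, show PX 1 s = 1 - PX 0 s by linarith]
        ring
    · rw [if_neg hB]
      refine Finset.sum_eq_zero fun i _ => ?_
      rw [if_neg (show ¬ σ i = s from fun h => hB (by rw [← h]; exact Bhat_pos hPi i))]
  rw [PhatY, Finset.sum_comm]
  refine Finset.sum_congr rfl fun x _ => ?_
  have hsplit : ∀ i, (Pi i * Q y x (σ i)) * encAvg Pi σ PX i x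
      = ∑ s, (if σ i = s then Q y x s * (Pi i * encAvg Pi σ PX i x) else 0) := by
    intro i
    rw [Finset.sum_ite_eq, if_pos (Finset.mem_univ _)]
    ring
  rw [Finset.sum_congr rfl (fun i _ => hsplit i), Finset.sum_comm]
  refine Finset.sum_congr rfl fun s _ => ?_
  have hpull : ∑ i, (if σ i = s then Q y x s * (Pi i * encAvg Pi σ PX i x) else 0)
      = Q y x s * ∑ i, (if σ i = s then Pi i * encAvg Pi σ PX i x else 0) := by
    rw [Finset.mul_sum]
    exact Finset.sum_congr rfl fun i _ => by rw [mul_ite, mul_zero]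
  rw [hpull, key x s]
  split_ifs
  · ring
  · rw [mul_zero]

end Model3

/-- In the one-step transmission model with binary DRPM
encoding, for every message `w` and symbol `x̄` with `P(W=w, X=x̄) > 0`
(which equals `Π(w)·ē(x̄|w)` by the model's joint law, `W ⟂ V`), and every `y`:
`E[ Σ_x Σ_s Q(y|x,s)·(Σ_i 1[e(i,V^{σ(i)})=x]·1[σ(i)=s]·Π(i)) | W=w, X=x̄ ]
  = P̂_Y(y) + Q(y|x̄,σ(w))·Π(w) − Π(w)·Σ_x Q(y|x,σ(w))·ē(x|w)`.
The conditional expectation is written as the restricted integral over the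
common randomness divided by `ē(x̄|w) = P(e(w,V^{σ(w)}) = x̄)`. -/
theorem conditional_expectation_of_output_belief
    {Y S : Type*} [Fintype Y] [Fintype S] [DecidableEq S]
    {M : ℕ} (hM : 2 ≤ M)
    (Pi : Fin M → ℝ) (hPi : ∀ i, 0 < Pi i ∧ Pi i < 1) (hPisum : ∑ i, Pi i = 1)
    (σ : Fin M → S)
    (Q : Y → Fin 2 → S → ℝ) (hQpos : ∀ y x s, 0 < Q y x s)
    (hQsum : ∀ x s, ∑ y, Q y x s = 1)
    (PX : Fin 2 → S → ℝ)
    (hPX : ∀ s, 0 < Bhat Pi σ s → (∀ x, 0 ≤ PX x s) ∧ PX 0 s + PX 1 s = 1)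
    (w : Fin M) (xb : Fin 2)
    (hpos : 0 < Pi w * encAvg Pi σ PX w xb)
    (y : Y) :
    (∫ v, (if enc Pi σ PX w (v (σ w)) = xb then
        ∑ x : Fin 2, ∑ s : S, Q y x s *
          (∑ i, (if enc Pi σ PX i (v (σ i)) = x then (1:ℝ) else 0) *
            (if σ i = s then (1:ℝ) else 0) * Pi i)
      else 0) ∂ uniformPi S) / encAvg Pi σ PX w xb
    = PhatY Pi σ PX Q y + Q y xb (σ w) * Pi w -
        Pi w * ∑ x : Fin 2, Q y x (σ w) * encAvg Pi σ PX w x := by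
  classical
  have hPi' : ∀ i, 0 < Pi i := fun i => (hPi i).1
  have hEpos : 0 < encAvg Pi σ PX w xb := by
    by_contra h
    push_neg at h
    nlinarith [hPi' w]
  have hintegrand : ∀ v : S → ℝ,
      (if enc Pi σ PX w (v (σ w)) = xb then
          ∑ x : Fin 2, ∑ s : S, Q y x s *
            (∑ i, (if enc Pi σ PX i (v (σ i)) = x then (1:ℝ) else 0) *
              (if σ i = s then (1:ℝ) else 0) * Pi i)
        else 0)
      = ∑ i, ∑ x : Fin 2, (Pi i * Q y x (σ i)) *
          ((if enc Pi σ PX w (v (σ w)) = xb then (1:ℝ) else 0) *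
            (if enc Pi σ PX i (v (σ i)) = x then (1:ℝ) else 0)) := by
    intro v
    have hinner : ∀ x : Fin 2,
        ∑ s : S, Q y x s * (∑ i, (if enc Pi σ PX i (v (σ i)) = x then (1:ℝ) else 0) *
            (if σ i = s then (1:ℝ) else 0) * Pi i)
        = ∑ i, (Pi i * Q y x (σ i)) *
            (if enc Pi σ PX i (v (σ i)) = x then (1:ℝ) else 0) := by
      intro x
      simp_rw [Finset.mul_sum]
      rw [Finset.sum_comm]
      refine Finset.sum_congr rfl fun i _ => ?_
      rw [Finset.sum_eq_single (σ i)]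
      · rw [if_pos rfl]; ring
      · intro s _ hs
        rw [if_neg (show ¬ σ i = s from fun hh => hs hh.symm), mul_zero, zero_mul, mul_zero]
      · intro hmem; exact absurd (Finset.mem_univ _) hmem
    by_cases hw : enc Pi σ PX w (v (σ w)) = xb
    · rw [if_pos hw]
      simp_rw [if_pos hw, one_mul]
      rw [Finset.sum_congr rfl (fun x _ => hinner x), Finset.sum_comm]
    · rw [if_neg hw]
      simp_rw [if_neg hw, zero_mul, mul_zero, Finset.sum_const_zero]
  have hInt : ∀ (i : Fin M) (x : Fin 2), Integrable (fun v : S → ℝ =>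
      (if enc Pi σ PX w (v (σ w)) = xb then (1:ℝ) else 0) *
        (if enc Pi σ PX i (v (σ i)) = x then (1:ℝ) else 0)) (uniformPi S) := by
    intro i x
    have hm : Measurable (fun v : S → ℝ =>
        (if enc Pi σ PX w (v (σ w)) = xb then (1:ℝ) else 0) *
          (if enc Pi σ PX i (v (σ i)) = x then (1:ℝ) else 0)) :=
      ((encInd_meas hPi' w xb).comp (measurable_pi_apply (σ w))).mul
        ((encInd_meas hPi' i x).comp (measurable_pi_apply (σ i)))
    refine (integrable_const (1:ℝ)).mono' hm.aestronglyMeasurable (ae_of_all _ fun v => ?_)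
    rw [Real.norm_eq_abs]
    split_ifs <;> norm_num
  have hN : (∫ v, (if enc Pi σ PX w (v (σ w)) = xb then
        ∑ x : Fin 2, ∑ s : S, Q y x s *
          (∑ i, (if enc Pi σ PX i (v (σ i)) = x then (1:ℝ) else 0) *
            (if σ i = s then (1:ℝ) else 0) * Pi i)
      else 0) ∂ uniformPi S)
      = ∑ i, ∑ x : Fin 2, (Pi i * Q y x (σ i)) *
          (∫ v, (if enc Pi σ PX w (v (σ w)) = xb then (1:ℝ) else 0) *
            (if enc Pi σ PX i (v (σ i)) = x then (1:ℝ) else 0) ∂ uniformPi S) := by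
    simp_rw [hintegrand]
    rw [integral_finset_sum _
      (fun i _ => integrable_finset_sum _ (fun x _ => (hInt i x).const_mul _))]
    refine Finset.sum_congr rfl fun i _ => ?_
    rw [integral_finset_sum _ (fun x _ => (hInt i x).const_mul _)]
    exact Finset.sum_congr rfl fun x _ => integral_const_mul _ _
  have hJ : ∀ i : Fin M, i ≠ w → ∀ x : Fin 2,
      (∫ v, (if enc Pi σ PX w (v (σ w)) = xb then (1:ℝ) else 0) *
        (if enc Pi σ PX i (v (σ i)) = x then (1:ℝ) else 0) ∂ uniformPi S)
      = encAvg Pi σ PX w xb * encAvg Pi σ PX i x := by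
    intro i hne x
    by_cases hσi : σ i = σ w
    · have hre : (fun v : S → ℝ =>
          (if enc Pi σ PX w (v (σ w)) = xb then (1:ℝ) else 0) *
            (if enc Pi σ PX i (v (σ i)) = x then (1:ℝ) else 0))
          = fun v => (fun r => (if enc Pi σ PX w r = xb then (1:ℝ) else 0) *
            (if enc Pi σ PX i r = x then (1:ℝ) else 0)) (v (σ w)) := by
        funext v; rw [hσi]
      rw [hre, uniformPi_eq,
        integral_eval (fun r => (if enc Pi σ PX w r = xb then (1:ℝ) else 0) *
          (if enc Pi σ PX i r = x then (1:ℝ) else 0)) (σ w)]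
      exact cross_same hPi' hne hσi xb x
    · rw [uniformPi_eq,
        integral_eval_mul (fun r => if enc Pi σ PX w r = xb then (1:ℝ) else 0)
          (fun r => if enc Pi σ PX i r = x then (1:ℝ) else 0)
          (show σ w ≠ σ i from fun h => hσi h.symm),
        ← encAvg_int_eval, ← encAvg_int_eval]
  have hJw : ∀ x : Fin 2,
      (∫ v, (if enc Pi σ PX w (v (σ w)) = xb then (1:ℝ) else 0) *
        (if enc Pi σ PX w (v (σ w)) = x then (1:ℝ) else 0) ∂ uniformPi S)
      = if x = xb then encAvg Pi σ PX w xb else 0 := by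
    intro x
    by_cases hx : x = xb
    · subst hx
      rw [if_pos rfl]
      have hpt : ∀ v : S → ℝ, (if enc Pi σ PX w (v (σ w)) = x then (1:ℝ) else 0) *
          (if enc Pi σ PX w (v (σ w)) = x then (1:ℝ) else 0)
          = (if enc Pi σ PX w (v (σ w)) = x then (1:ℝ) else 0) := by
        intro v; split_ifs <;> norm_num
      simp_rw [hpt]
      rfl
    · rw [if_neg hx]
      have hpt : ∀ v : S → ℝ, (if enc Pi σ PX w (v (σ w)) = xb then (1:ℝ) else 0) *
          (if enc Pi σ PX w (v (σ w)) = x then (1:ℝ) else 0) = (0:ℝ) := by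
        intro v
        by_cases h1 : enc Pi σ PX w (v (σ w)) = xb
        · rw [if_neg (show ¬ enc Pi σ PX w (v (σ w)) = x from
            fun h2 => hx (h2.symm.trans h1)), mul_zero]
        · rw [if_neg h1, zero_mul]
      simp_rw [hpt]
      exact integral_zero _ _
  rw [hN]
  have hsum : ∑ i, ∑ x : Fin 2, (Pi i * Q y x (σ i)) *
        (∫ v, (if enc Pi σ PX w (v (σ w)) = xb then (1:ℝ) else 0) *
          (if enc Pi σ PX i (v (σ i)) = x then (1:ℝ) else 0) ∂ uniformPi S)
      = (∑ x : Fin 2, (Pi w * Q y x (σ w)) * (if x = xb then encAvg Pi σ PX w xb else 0))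
        + ∑ i ∈ Finset.univ.erase w, ∑ x : Fin 2, (Pi i * Q y x (σ i)) *
            (encAvg Pi σ PX w xb * encAvg Pi σ PX i x) := by
    rw [← Finset.add_sum_erase _ _ (Finset.mem_univ w)]
    congr 1
    · exact Finset.sum_congr rfl fun x _ => by rw [hJw x]
    · exact Finset.sum_congr rfl fun i hi => Finset.sum_congr rfl fun x _ => by
        rw [hJ i (Finset.ne_of_mem_erase hi) x]
  rw [hsum]
  have hfirst : ∑ x : Fin 2, (Pi w * Q y x (σ w)) * (if x = xb then encAvg Pi σ PX w xb else 0)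
      = (Pi w * Q y xb (σ w)) * encAvg Pi σ PX w xb := by
    rw [Finset.sum_congr rfl (fun x _ => by
      rw [mul_ite, mul_zero] :
      ∀ x ∈ Finset.univ, (Pi w * Q y x (σ w)) * (if x = xb then encAvg Pi σ PX w xb else 0)
        = if x = xb then (Pi w * Q y x (σ w)) * encAvg Pi σ PX w xb else 0),
      Finset.sum_ite_eq' Finset.univ xb
        (fun x => (Pi w * Q y x (σ w)) * encAvg Pi σ PX w xb),
      if_pos (Finset.mem_univ _)]
  have herase : ∑ i ∈ Finset.univ.erase w, ∑ x : Fin 2, (Pi i * Q y x (σ i)) * encAvg Pi σ PX i x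
      = (∑ i, ∑ x : Fin 2, (Pi i * Q y x (σ i)) * encAvg Pi σ PX i x)
        - ∑ x : Fin 2, (Pi w * Q y x (σ w)) * encAvg Pi σ PX w x := by
    rw [← Finset.add_sum_erase _
      (fun i => ∑ x : Fin 2, (Pi i * Q y x (σ i)) * encAvg Pi σ PX i x) (Finset.mem_univ w)]
    ring
  have hsecond : ∑ i ∈ Finset.univ.erase w, ∑ x : Fin 2, (Pi i * Q y x (σ i)) *
        (encAvg Pi σ PX w xb * encAvg Pi σ PX i x)
      = encAvg Pi σ PX w xb *
          ((∑ i, ∑ x : Fin 2, (Pi i * Q y x (σ i)) * encAvg Pi σ PX i x)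
            - ∑ x : Fin 2, (Pi w * Q y x (σ w)) * encAvg Pi σ PX w x) := by
    rw [← herase, Finset.mul_sum]
    refine Finset.sum_congr rfl fun i _ => ?_
    rw [Finset.mul_sum]
    exact Finset.sum_congr rfl fun x _ => by ring
  rw [hfirst, hsecond, phat_eq hPi' hPX Q y]
  have hQsum' : Pi w * ∑ x : Fin 2, Q y x (σ w) * encAvg Pi σ PX w x
      = ∑ x : Fin 2, (Pi w * Q y x (σ w)) * encAvg Pi σ PX w x := by
    rw [Finset.mul_sum]
    exact Finset.sum_congr rfl fun x _ => by ring
  rw [div_eq_iff hEpos.ne', hQsum']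
  ring
end

section
/- Let 𝒴 be a finite set, let p and c be probability mass functions on 𝒴, and let π ∈ [0,1) be such that p(y) − π·c(y) > 0 for every y ∈ 𝒴. Then Σ_{y∈𝒴} c(y) · log( p(y) / (p(y) − π·c(y)) ) ≥ log( 1/(1−π) ). -/
open Finset

/-! Put `x y = (p y - π c y) / p y`. By concavity of `log`, `∑ c log x ≤ log (∑ c x)`, and
`∑ c x = 1 - π ∑ c² / p ≤ 1 - π` because `∑ c² / p ≥ (∑ c)² / ∑ p = 1` (Cauchy–Schwarz).
Negating gives the bound. -/

section WeightedLog

variable {ι : Type*} {s : Finset ι} {w x : ι → ℝ}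

theorem sum_mul_log_le_log_sum_mul (hw : ∀ i ∈ s, 0 ≤ w i) (hw₁ : ∑ i ∈ s, w i = 1)
    (hx : ∀ i ∈ s, 0 < x i) :
    ∑ i ∈ s, w i * Real.log (x i) ≤ Real.log (∑ i ∈ s, w i * x i) := by
  simpa using strictConcaveOn_log_Ioi.concaveOn.le_map_sum hw hw₁ hx

theorem sum_mul_pos_of_sum_eq_one (hw : ∀ i ∈ s, 0 ≤ w i) (hw₁ : ∑ i ∈ s, w i = 1)
    (hx : ∀ i ∈ s, 0 < x i) : 0 < ∑ i ∈ s, w i * x i := by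
  simpa using (convex_Ioi (0 : ℝ)).sum_mem hw hw₁ hx

end WeightedLog

theorem sum_mul_sub_mul_div_le {ι : Type*} (s : Finset ι) {p c : ι → ℝ} {π : ℝ}
    (hp : ∀ i ∈ s, 0 < p i) (hp₁ : ∑ i ∈ s, p i = 1) (hc₁ : ∑ i ∈ s, c i = 1) (hπ : 0 ≤ π) :
    ∑ i ∈ s, c i * ((p i - π * c i) / p i) ≤ 1 - π := by
  have hCS : 1 ≤ ∑ i ∈ s, c i ^ 2 / p i := by
    simpa [hc₁, hp₁] using sq_sum_div_le_sum_sq_div s c hp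
  calc ∑ i ∈ s, c i * ((p i - π * c i) / p i)
      = ∑ i ∈ s, c i - π * ∑ i ∈ s, c i ^ 2 / p i := by
        rw [mul_sum, ← sum_sub_distrib]
        refine sum_congr rfl fun i hi => ?_
        field_simp [(hp i hi).ne']
    _ ≤ 1 - π := by rw [hc₁]; nlinarith

theorem jensen_drift_step_general
    {Y : Type*} [Fintype Y]
    (p c : Y → ℝ)
    (hpsum : ∑ y, p y = 1)
    (hc : ∀ y, 0 ≤ c y) (hcsum : ∑ y, c y = 1)
    (π : ℝ) (hπ0 : 0 ≤ π)
    (hpos : ∀ y, 0 < p y - π * c y) :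
    Real.log (1 / (1 - π)) ≤ ∑ y, c y * Real.log (p y / (p y - π * c y)) := by
  have hp : ∀ y ∈ univ, 0 < p y := fun y _ => by nlinarith [hpos y, mul_nonneg hπ0 (hc y)]
  have hx : ∀ y ∈ univ, 0 < (p y - π * c y) / p y := fun y hy => div_pos (hpos y) (hp y hy)
  have hw : ∀ y ∈ univ, 0 ≤ c y := fun y _ => hc y
  calc Real.log (1 / (1 - π)) = -Real.log (1 - π) := by rw [one_div, Real.log_inv]
    _ ≤ -Real.log (∑ y, c y * ((p y - π * c y) / p y)) :=
        neg_le_neg <| Real.log_le_log (sum_mul_pos_of_sum_eq_one hw hcsum hx)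
          (sum_mul_sub_mul_div_le univ hp hpsum hcsum hπ0)
    _ ≤ -∑ y, c y * Real.log ((p y - π * c y) / p y) :=
        neg_le_neg (sum_mul_log_le_log_sum_mul hw hcsum hx)
    _ = ∑ y, c y * Real.log (p y / (p y - π * c y)) := by
        simp only [← sum_neg_distrib, ← mul_neg, ← Real.log_inv, inv_div]

/-- Let `𝒴` be finite, `p, c` pmfs on `𝒴`, and `π ∈ [0,1)`
with `p(y) − π·c(y) > 0` for all `y`.  Then
`Σ_y c(y)·log(p(y)/(p(y) − π·c(y))) ≥ log(1/(1−π))`. -/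
theorem jensen_drift_step
    {Y : Type*} [Fintype Y]
    (p c : Y → ℝ)
    (hp : ∀ y, 0 ≤ p y) (hpsum : ∑ y, p y = 1)
    (hc : ∀ y, 0 ≤ c y) (hcsum : ∑ y, c y = 1)
    (π : ℝ) (hπ0 : 0 ≤ π) (hπ1 : π < 1)
    (hpos : ∀ y, 0 < p y - π * c y) :
    Real.log (1 / (1 - π)) ≤ ∑ y, c y * Real.log (p y / (p y - π * c y)) :=
  jensen_drift_step_general p c hpsum hc hcsum π hπ0 hpos
end

section
/- Let 𝒴 be a finite set and q₀, q₁ strictly positive probability mass functions on 𝒴. Define, for p ∈ (0,1) and r ∈ [0, 1−p], F(p, r) = Σ_{y∈𝒴} q₁(y) · log( q₁(y)·(1−r) / ( q₁(y)·(1−r−p) + q₀(y)·p ) ). Then as p → 1⁻ the drift converges to the reverse Kullback–Leibler divergence, uniformly in r: lim_{p→1⁻} sup_{r∈[0,1−p]} | F(p, r) − D(q₁‖q₀) | = 0, where D(q₁‖q₀) = Σ_{y∈𝒴} q₁(y)·log( q₁(y)/q₀(y) ). -/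
set_option maxHeartbeats 1000000


open Finset

/-- Let `𝒴` be finite and `q₀, q₁` strictly positive pmfs
on `𝒴`.  For `p ∈ (0,1)` and `r ∈ [0, 1−p]` set
`F(p,r) = Σ_y q₁(y) log(q₁(y)(1−r)/(q₁(y)(1−r−p) + q₀(y)p))`.  Then as
`p → 1⁻` the drift converges to the reverse KL divergence `D(q₁‖q₀)`,
uniformly in `r`: for every `ε > 0` there is `p₀ ∈ (0,1)` such that for all
`p ∈ (p₀, 1)` and all `r ∈ [0, 1−p]`, `|F(p,r) − D(q₁‖q₀)| < ε`. -/
theorem drift_tendsto_reverse_KL_uniformly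
    {Y : Type*} [Fintype Y]
    (q0 q1 : Y → ℝ)
    (hq0pos : ∀ y, 0 < q0 y) (hq0sum : ∑ y, q0 y = 1)
    (hq1pos : ∀ y, 0 < q1 y) (hq1sum : ∑ y, q1 y = 1) :
    ∀ ε > (0:ℝ), ∃ p₀ ∈ Set.Ioo (0:ℝ) 1, ∀ p ∈ Set.Ioo p₀ (1:ℝ),
      ∀ r ∈ Set.Icc (0:ℝ) (1 - p),
        |(∑ y, q1 y * Real.log (q1 y * (1 - r) /
              (q1 y * (1 - r - p) + q0 y * p))) -
          ∑ y, q1 y * Real.log (q1 y / q0 y)| < ε := by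
  intro ε hε
  set M : ℝ := ∑ y, q1 y / q0 y with hM
  have hMnn : 0 ≤ M := Finset.sum_nonneg fun i _ =>
    div_nonneg (hq1pos i).le (hq0pos i).le
  have hMy : ∀ y, q1 y ≤ M * q0 y := by
    intro y
    have h1 : q1 y / q0 y ≤ M :=
      Finset.single_le_sum (f := fun y => q1 y / q0 y)
        (fun i _ => div_nonneg (hq1pos i).le (hq0pos i).le) (Finset.mem_univ y)
    have h2 : q1 y / q0 y * q0 y ≤ M * q0 y :=
      mul_le_mul_of_nonneg_right h1 (hq0pos y).le
    rwa [div_mul_cancel₀ _ (ne_of_gt (hq0pos y))] at h2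
  have hM2 : 0 < M + 2 := by linarith
  set δ : ℝ := min (1/2 : ℝ) (ε / (2 * (M + 2))) with hδ
  have hδpos : 0 < δ := lt_min (by norm_num) (by positivity)
  have hδhalf : δ ≤ 1/2 := min_le_left _ _
  have hδε : δ ≤ ε / (2 * (M + 2)) := min_le_right _ _
  refine ⟨1 - δ, ⟨by linarith, by linarith⟩, ?_⟩
  intro p hp r hr
  have hp1 : p < 1 := hp.2
  have hpδ : 1 - p < δ := by linarith [hp.1]
  have hphalf : (1/2 : ℝ) ≤ p := by linarith
  have hppos : 0 < p := by linarith
  set s : ℝ := 1 - r with hs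
  have hsp : p ≤ s := by
    have := hr.2; simp only [hs]; linarith
  have hs1 : s ≤ 1 := by
    have := hr.1; simp only [hs]; linarith
  have hspos : 0 < s := lt_of_lt_of_le hppos hsp
  clear_value s
  have key : ∀ y : Y,
      |q1 y * Real.log (q1 y * s / (q1 y * (s - p) + q0 y * p)) -
        q1 y * Real.log (q1 y / q0 y)| ≤ q1 y * ((M + 2) * (1 - p)) := by
    intro y
    have hq0 := hq0pos y
    have hq1 := hq1pos y
    have hD : 0 < q1 y * (s - p) + q0 y * p := by nlinarith
    have hterm : q1 y * Real.log (q1 y * s / (q1 y * (s - p) + q0 y * p)) -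
        q1 y * Real.log (q1 y / q0 y) =
        q1 y * Real.log (q0 y * s / (q1 y * (s - p) + q0 y * p)) := by
      rw [Real.log_div (by positivity) (ne_of_gt hD),
          Real.log_div (by positivity) (ne_of_gt hD),
          Real.log_div (ne_of_gt hq1) (ne_of_gt hq0),
          Real.log_mul (ne_of_gt hq1) (ne_of_gt hspos),
          Real.log_mul (ne_of_gt hq0) (ne_of_gt hspos)]
      ring
    rw [hterm, abs_mul, abs_of_pos hq1]
    refine mul_le_mul_of_nonneg_left ?_ hq1.le
    have hratio : 0 < q0 y * s / (q1 y * (s - p) + q0 y * p) := by positivity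
    rw [abs_le]
    constructor
    · -- lower bound
      have hden : 0 < M * (1 - p) + 1 := by nlinarith
      have hlb : p / (M * (1 - p) + 1) ≤ q0 y * s / (q1 y * (s - p) + q0 y * p) := by
        rw [div_le_div_iff₀ hden hD]
        have h1 : q1 y * (s - p) ≤ M * q0 y * (1 - p) := by
          have := hMy y
          nlinarith
        have h1' : p * (q1 y * (s - p)) ≤ p * (M * q0 y * (1 - p)) :=
          mul_le_mul_of_nonneg_left h1 hppos.le
        have hq0ps : q0 y * p ≤ q0 y * s := mul_le_mul_of_nonneg_left hsp hq0.le
        have h2' : q0 y * p * (M * (1 - p)) ≤ q0 y * s * (M * (1 - p)) :=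
          mul_le_mul_of_nonneg_right hq0ps (mul_nonneg hMnn (by linarith))
        have h3' : q0 y * (p * p) ≤ q0 y * p := by
          have hpp : p * p ≤ p := by nlinarith
          exact mul_le_mul_of_nonneg_left hpp hq0.le
        nlinarith [hq0ps]
      have hlog := Real.log_le_log (by positivity) hlb
      have heq : Real.log (p / (M * (1 - p) + 1)) =
          Real.log p - Real.log (M * (1 - p) + 1) :=
        Real.log_div (ne_of_gt hppos) (ne_of_gt hden)
      have h2 : Real.log (M * (1 - p) + 1) ≤ M * (1 - p) := by
        have := Real.log_le_sub_one_of_pos hden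
        linarith
      have h4 : 1 / p ≤ 2 * (1 - p) + 1 := by
        rw [div_le_iff₀ hppos]; nlinarith
      have h3 : -(2 * (1 - p)) ≤ Real.log p := by
        have hinv : (0:ℝ) < 1 / p := by positivity
        have h5 := Real.log_le_sub_one_of_pos hinv
        have hlp : Real.log (1 / p) = -Real.log p := by
          rw [one_div, Real.log_inv]
        linarith
      have hexp : (M + 2) * (1 - p) = M * (1 - p) + 2 * (1 - p) := by ring
      linarith
    · -- upper bound
      have hub : q0 y * s / (q1 y * (s - p) + q0 y * p) ≤ 1 / p := by
        rw [div_le_div_iff₀ hD hppos]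
        nlinarith [mul_nonneg hq1.le (sub_nonneg.mpr hsp),
          mul_le_mul_of_nonneg_right (mul_le_mul_of_nonneg_left hs1 hq0.le) hppos.le]
      have hlog := Real.log_le_log hratio hub
      have h1 : Real.log (1 / p) ≤ 1 / p - 1 :=
        Real.log_le_sub_one_of_pos (by positivity)
      have h4 : 1 / p ≤ 2 * (1 - p) + 1 := by
        rw [div_le_iff₀ hppos]; nlinarith
      have hMp : (0:ℝ) ≤ M * (1 - p) := mul_nonneg hMnn (by linarith)
      have hexp : (M + 2) * (1 - p) = M * (1 - p) + 2 * (1 - p) := by ring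
      linarith
  calc |(∑ y, q1 y * Real.log (q1 y * s /
              (q1 y * (s - p) + q0 y * p))) -
          ∑ y, q1 y * Real.log (q1 y / q0 y)|
      = |∑ y, (q1 y * Real.log (q1 y * s / (q1 y * (s - p) + q0 y * p)) -
          q1 y * Real.log (q1 y / q0 y))| := by
        rw [Finset.sum_sub_distrib]
    _ ≤ ∑ y, |q1 y * Real.log (q1 y * s / (q1 y * (s - p) + q0 y * p)) -
          q1 y * Real.log (q1 y / q0 y)| := Finset.abs_sum_le_sum_abs _ _
    _ ≤ ∑ y, q1 y * ((M + 2) * (1 - p)) :=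
        Finset.sum_le_sum fun y _ => key y
    _ = (M + 2) * (1 - p) := by
        rw [← Finset.sum_mul, hq1sum, one_mul]
    _ < ε := by
        have h1 : (M + 2) * (1 - p) < (M + 2) * δ :=
          mul_lt_mul_of_pos_left hpδ hM2
        have h2 : (M + 2) * (ε / (2 * (M + 2))) = ε / 2 := by
          field_simp
        have h3 : (M + 2) * δ ≤ ε / 2 := by
          rw [← h2]; exact mul_le_mul_of_nonneg_left hδε hM2.le
        linarith
end
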